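/- arXiv:1810.10124 — 5 statements merged into one kernel-verified Lean document; each statement's English description precedes it below -/
import Mathlib

section
/- Let f and g be homomorphism height functions on Z^d and let C be a union of connected components of the set {v : f(v) ≠ g(v)}. Define f̃ = g on C and f̃ = f off C, and g̃ = f on C and g̃ = g off C. Then f̃ and g̃ are again homomorphism height functions on Z^d. -/
open MeasureTheory Filter
open scoped ENNReal Classical

noncomputable section

def norm1 {d : ℕ} (v : Fin d → ℤ) : ℤ := ∑ i, |v i|

def Adj {d : ℕ} (u v : Fin d → ℤ) : Prop := norm1 (u - v) = 1

def IsHHF {d : ℕ} (f : (Fin d → ℤ) → ℤ) : Prop :=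
  (∀ u v, Adj u v → |f u - f v| = 1) ∧ ∀ v, f v % 2 = norm1 v % 2

def IsHHFOn {d : ℕ} (S : Set (Fin d → ℤ)) (f : (Fin d → ℤ) → ℤ) : Prop :=
  (∀ u ∈ S, ∀ w ∈ S, Adj u w → |f u - f w| = 1) ∧ ∀ u ∈ S, f u % 2 = norm1 u % 2

def connIn {d : ℕ} (S : Set (Fin d → ℤ)) (a b : Fin d → ℤ) : Prop :=
  Relation.ReflTransGen (fun x y => x ∈ S ∧ y ∈ S ∧ Adj x y) a b

theorem stmt2 {d : ℕ} (f g : (Fin d → ℤ) → ℤ)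
    (hf : IsHHF f) (hg : IsHHF g)
    (C : Set (Fin d → ℤ))
    (hC1 : C ⊆ {v | f v ≠ g v})
    (hC2 : ∀ u ∈ C, ∀ v, connIn {x | f x ≠ g x} u v → v ∈ C) :
    IsHHF (fun v => if v ∈ C then g v else f v) ∧
      IsHHF (fun v => if v ∈ C then f v else g v) := by
  have key : ∀ u ∈ C, ∀ v, v ∉ C → Adj u v → f v = g v := by
    intro u hu v hv hadj
    by_contra hne
    exact hv (hC2 u hu v (Relation.ReflTransGen.single ⟨hC1 hu, hne, hadj⟩))
  refine ⟨⟨?_, ?_⟩, ?_, ?_⟩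
  · intro u v hadj
    by_cases hu : u ∈ C <;> by_cases hv : v ∈ C <;> simp only [hu, hv, if_pos, if_neg,
      if_true, if_false]
    · exact hg.1 u v hadj
    · rw [key u hu v hv hadj]; exact hg.1 u v hadj
    · have : Adj v u := by
        unfold Adj at *
        have : u - v = -(v - u) := by ring
        rw [this] at hadj
        simpa [norm1, abs_neg, abs_sub_comm] using hadj
      rw [key v hv u hu this]; exact hg.1 u v hadj
    · exact hf.1 u v hadj
  · intro v
    by_cases hv : v ∈ C <;> simp only [hv, if_true, if_false]
    exacts [hg.2 v, hf.2 v]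
  · intro u v hadj
    by_cases hu : u ∈ C <;> by_cases hv : v ∈ C <;> simp only [hu, hv, if_pos, if_neg,
      if_true, if_false]
    · exact hf.1 u v hadj
    · rw [show g v = f v from (key u hu v hv hadj).symm]; exact hf.1 u v hadj
    · have : Adj v u := by
        unfold Adj at *
        have : u - v = -(v - u) := by ring
        rw [this] at hadj
        simpa [norm1, abs_neg, abs_sub_comm] using hadj
      rw [← key v hv u hu this]; exact hf.1 u v hadj
    · exact hg.1 u v hadj
  · intro v
    by_cases hv : v ∈ C <;> simp only [hv, if_true, if_false]
    exacts [hf.2 v, hg.2 v]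
end
end

section
/- Every homomorphism height function defined on an arbitrary subset of Z^d extends to a homomorphism height function on all of Z^d. Specifically, if f is a function on a subset Δ of Z^d satisfying |f(u) - f(v)| ≤ ||u - v||_1 and f(v) ≡ ||v||_1 (mod 2) for all u, v in Δ, then the function f_max(v) = min{f(w) + ||v - w||_1 : w ∈ Δ} is a homomorphism height function on Z^d agreeing with f on Δ (assuming Δ is nonempty and the minimum is attained, e.g. Δ finite). -/
open MeasureTheory Filter
open scoped ENNReal Classical

noncomputable section

lemma norm1_triangle' {d : ℕ} (a b c : Fin d → ℤ) :
    norm1 (a - c) ≤ norm1 (a - b) + norm1 (b - c) := by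
  unfold norm1
  rw [← Finset.sum_add_distrib]
  apply Finset.sum_le_sum
  intro i _
  have h : (a - c) i = (a - b) i + (b - c) i := by simp
  rw [h]
  exact abs_add_le _ _

lemma norm1_mod_two {d : ℕ} (v : Fin d → ℤ) : norm1 v % 2 = (∑ i, v i) % 2 := by
  unfold norm1
  rw [Finset.sum_int_mod, Finset.sum_int_mod (f := v)]
  congr 1
  apply Finset.sum_congr rfl
  intro i _
  rcases abs_choice (v i) with h | h <;> omega

lemma norm1_sub_mod_two {d : ℕ} (u v : Fin d → ℤ) :
    norm1 (u - v) % 2 = (norm1 u + norm1 v) % 2 := by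
  have h1 := norm1_mod_two (u - v)
  have h2 := norm1_mod_two u
  have h3 := norm1_mod_two v
  have h4 : ∑ i, (u - v) i = (∑ i, u i) - ∑ i, v i := by
    simp [Finset.sum_sub_distrib]
  rw [h4] at h1
  omega

theorem stmt4 {d : ℕ} (Δ : Finset (Fin d → ℤ)) (hne : Δ.Nonempty)
    (f : (Fin d → ℤ) → ℤ)
    (hlip : ∀ u ∈ Δ, ∀ v ∈ Δ, |f u - f v| ≤ norm1 (u - v))
    (hpar : ∀ v ∈ Δ, f v % 2 = norm1 v % 2) :
    IsHHF (fun v => Δ.inf' hne (fun w => f w + norm1 (v - w))) ∧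
      ∀ v ∈ Δ, Δ.inf' hne (fun w => f w + norm1 (v - w)) = f v := by
  set g : (Fin d → ℤ) → ℤ := fun v => Δ.inf' hne (fun w => f w + norm1 (v - w)) with hg
  -- parity of g
  have hparg : ∀ v, g v % 2 = norm1 v % 2 := by
    intro v
    obtain ⟨w, hw, hEq⟩ := Finset.exists_mem_eq_inf' hne (fun w => f w + norm1 (v - w))
    have h1 := hpar w hw
    have h2 := norm1_sub_mod_two v w
    have : g v = f w + norm1 (v - w) := hEq
    omega
  -- Lipschitz for g
  have hlipg : ∀ u v, g u - g v ≤ norm1 (u - v) := by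
    intro u v
    obtain ⟨w, hw, hEq⟩ := Finset.exists_mem_eq_inf' hne (fun w => f w + norm1 (v - w))
    have h1 : g u ≤ f w + norm1 (u - w) := Finset.inf'_le _ hw
    have h2 : norm1 (u - w) ≤ norm1 (u - v) + norm1 (v - w) := norm1_triangle' u v w
    have h3 : g v = f w + norm1 (v - w) := hEq
    omega
  refine ⟨⟨?_, hparg⟩, ?_⟩
  · intro u v hadj
    have h1 := hlipg u v
    have h2 := hlipg v u
    have h3 : norm1 (v - u) = norm1 (u - v) := by
      unfold norm1
      apply Finset.sum_congr rfl
      intro i _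
      rw [← abs_neg]
      congr 1
      simp
    rw [hadj] at h1
    rw [h3, hadj] at h2
    have hpu := hparg u
    have hpv := hparg v
    have hod := norm1_sub_mod_two u v
    rw [hadj] at hod
    have : g u - g v = 1 ∨ g u - g v = -1 := by omega
    rcases this with h | h <;> simp [h]
  · intro v hv
    have hgv : Δ.inf' hne (fun w => f w + norm1 (v - w)) = g v := rfl
    rw [hgv]
    apply le_antisymm
    · have : g v ≤ f v + norm1 (v - v) := Finset.inf'_le _ hv
      have hz : norm1 (v - v) = 0 := by simp [norm1]
      omega
    · apply Finset.le_inf'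
      intro w hw
      have := hlip v hv w hw
      have := abs_le.mp this
      omega
end
end

section
/- Let f be a homomorphism height function on Z^d and Δ a nonempty finite subset of Z^d. Define f_max(v) = min{f(w) + ||v - w||_1 : w ∈ Δ} and f_min(v) = max{f(w) - ||v - w||_1 : w ∈ Δ}. Then f_max and f_min agree with f on Δ, and any homomorphism height function g on Z^d agreeing with f on Δ satisfies f_min ≤ g ≤ f_max pointwise. -/
open MeasureTheory Filter
open scoped ENNReal Classical

noncomputable section

lemma norm1_nonneg {d : ℕ} (v : Fin d → ℤ) : 0 ≤ norm1 v :=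
  Finset.sum_nonneg fun i _ => abs_nonneg _

lemma abs_sub_sign (x : ℤ) (hx : x ≠ 0) : |x - Int.sign x| = |x| - 1 := by
  rcases lt_or_gt_of_ne hx with h | h
  · rw [Int.sign_eq_neg_one_of_neg h, abs_of_neg h, abs_of_nonpos (by omega)]; ring
  · rw [Int.sign_eq_one_of_pos h, abs_of_pos h, abs_of_nonneg (by omega)]

lemma lip_aux {d : ℕ} (f : (Fin d → ℤ) → ℤ) (hf : IsHHF f) :
    ∀ n : ℕ, ∀ u v, norm1 (u - v) = n → |f u - f v| ≤ n := by
  intro n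
  induction n with
  | zero =>
    intro u v h
    have huv : u = v := by
      funext j
      have h0 : ∀ j ∈ Finset.univ, |(u - v) j| = 0 := by
        intro j _
        have := (Finset.sum_eq_zero_iff_of_nonneg (fun i _ => abs_nonneg ((u - v) i))).mp h j
          (Finset.mem_univ j)
        exact this
      have := h0 j (Finset.mem_univ j)
      have : (u - v) j = 0 := abs_eq_zero.mp this
      simpa [sub_eq_zero] using this
    simp [huv]
  | succ n ih =>
    intro u v h
    have hex : ∃ i, (u - v) i ≠ 0 := by
      by_contra hc
      push_neg at hc
      have : norm1 (u - v) = 0 := by simp [norm1, hc]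
      omega
    obtain ⟨i, hi⟩ := hex
    set s : ℤ := Int.sign ((u - v) i) with hs
    have habs : |s| = 1 := by
      rw [hs]
      rcases lt_or_gt_of_ne hi with h' | h'
      · rw [Int.sign_eq_neg_one_of_neg h']; rfl
      · rw [Int.sign_eq_one_of_pos h']; rfl
    set w : Fin d → ℤ := v + Pi.single i s with hw
    have hwv : Adj w v := by
      have : w - v = Pi.single i s := by simp [hw]
      simp only [Adj, this, norm1]
      rw [Finset.sum_eq_single i]
      · simpa using habs
      · intro b _ hb; simp [Pi.single_eq_of_ne hb]
      · simp
    have huw : norm1 (u - w) = n := by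
      have hfun0 : u - w = (u - v) - Pi.single i s := by
        funext j; simp [hw]; ring
      have hfun : ∀ j, (u - w) j = (u - v) j - (Pi.single i s : Fin d → ℤ) j :=
        fun j => congrFun hfun0 j
      have hterm : ∀ j, |(u - w) j| = |(u - v) j| - (if j = i then 1 else 0) := by
        intro j
        rw [hfun j]
        by_cases hj : j = i
        · subst hj
          simp only [Pi.sub_apply, Pi.single_eq_same, if_pos rfl]
          exact abs_sub_sign _ hi
        · simp [Pi.single_eq_of_ne hj, hj]
      have : norm1 (u - w) = norm1 (u - v) - ∑ j, (if j = i then (1:ℤ) else 0) := by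
        simp only [norm1, hterm, Finset.sum_sub_distrib]
      have hsum : ∑ j, (if j = i then (1:ℤ) else 0) = 1 := by simp
      rw [this, hsum, h]
      push_cast
      ring
    have h1 := ih u w huw
    have h2 := hf.1 w v hwv
    calc |f u - f v| ≤ |f u - f w| + |f w - f v| := by
          have := abs_sub_abs_le_abs_sub (f u - f v) (f w - f v)
          calc |f u - f v| = |(f u - f w) + (f w - f v)| := by ring_nf
            _ ≤ |f u - f w| + |f w - f v| := abs_add_le _ _
      _ ≤ n + 1 := by omega
      _ = ((n + 1 : ℕ) : ℤ) := by push_cast; ring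

lemma lip {d : ℕ} (f : (Fin d → ℤ) → ℤ) (hf : IsHHF f) (u v : Fin d → ℤ) :
    |f u - f v| ≤ norm1 (u - v) := by
  have hn := norm1_nonneg (u - v)
  have := lip_aux f hf (norm1 (u - v)).toNat u v (by omega)
  omega

lemma norm1_sub_comm {d : ℕ} (u v : Fin d → ℤ) : norm1 (u - v) = norm1 (v - u) := by
  simp only [norm1]
  congr 1; funext j; rw [show (u - v) j = -((v - u) j) by simp, abs_neg]

theorem stmt5 {d : ℕ} (f : (Fin d → ℤ) → ℤ) (hf : IsHHF f)
    (Δ : Finset (Fin d → ℤ)) (hne : Δ.Nonempty) :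
    (∀ v ∈ Δ, Δ.inf' hne (fun w => f w + norm1 (v - w)) = f v ∧
        Δ.sup' hne (fun w => f w - norm1 (v - w)) = f v) ∧
      ∀ g : (Fin d → ℤ) → ℤ, IsHHF g → (∀ v ∈ Δ, g v = f v) →
        ∀ v, Δ.sup' hne (fun w => f w - norm1 (v - w)) ≤ g v ∧
          g v ≤ Δ.inf' hne (fun w => f w + norm1 (v - w)) := by
  constructor
  · intro v hv
    constructor
    · apply le_antisymm
      · have := Finset.inf'_le (fun w => f w + norm1 (v - w)) hv
        exact Finset.inf'_le_of_le _ hv (by simp [norm1])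
      · apply Finset.le_inf'
        intro w hw
        have h1 := lip f hf v w
        have h2 := le_abs_self (f v - f w)
        omega
    · apply le_antisymm
      · apply Finset.sup'_le
        intro w hw
        have h1 := lip f hf w v
        have h2 := le_abs_self (f w - f v)
        have h3 := norm1_sub_comm v w
        omega
      · have := Finset.le_sup' (fun w => f w - norm1 (v - w)) hv
        exact Finset.le_sup'_of_le _ hv (by simp [norm1])
  · intro g hg hgf v
    constructor
    · apply Finset.sup'_le
      intro w hw
      have h1 := lip g hg w v
      have h2 := le_abs_self (g w - g v)
      have h3 := norm1_sub_comm v w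
      have h4 := hgf w hw
      omega
    · apply Finset.le_inf'
      intro w hw
      have h1 := lip g hg v w
      have h2 := le_abs_self (g v - g w)
      have h4 := hgf w hw
      omega
end
end

section
/- Fix a finite set Λ ⊂ Z^d, a homomorphism height function boundary condition τ on the external boundary of Λ, a vertex v ∈ Λ, an integer m with m ≡ ||v||_1 (mod 2), and a positive integer k. Let H_j denote the set of homomorphism height functions on Λ⁺ = Λ ∪ ∂Λ agreeing with τ on ∂Λ and taking value j at v. Then |H_{m+2k}| · |H_{m-2k}| ≤ |H_m|^2. -/
open MeasureTheory Filter
open scoped ENNReal Classical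

noncomputable section

def extBd {d : ℕ} (Λ : Finset (Fin d → ℤ)) : Set (Fin d → ℤ) :=
  {w | w ∉ Λ ∧ ∃ u ∈ Λ, Adj u w}

def lamPlus {d : ℕ} (Λ : Finset (Fin d → ℤ)) : Set (Fin d → ℤ) :=
  (↑Λ : Set (Fin d → ℤ)) ∪ extBd Λ

/-- Homomorphism height functions on `Λ⁺`, normalized to be `0` outside `Λ⁺`,
agreeing with `τ` on the external boundary of `Λ` and taking value `j` at `v`. -/
def Hset {d : ℕ} (Λ : Finset (Fin d → ℤ)) (τ : (Fin d → ℤ) → ℤ)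
    (v : Fin d → ℤ) (j : ℤ) : Set ((Fin d → ℤ) → ℤ) :=
  {f | (∀ u, u ∉ lamPlus Λ → f u = 0) ∧ IsHHFOn (lamPlus Λ) f ∧
    (∀ w ∈ extBd Λ, f w = τ w) ∧ f v = j}

-- ### basic lemmas

lemma adj_symm {d : ℕ} {u w : Fin d → ℤ} (h : Adj u w) : Adj w u := by
  unfold Adj norm1 at *
  rw [← h]
  exact Finset.sum_congr rfl fun i _ => by simp [abs_sub_comm]

lemma adj_abs_le {d : ℕ} {u w : Fin d → ℤ} (h : Adj u w) (i : Fin d) :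
    |u i - w i| ≤ 1 := by
  unfold Adj norm1 at h
  rw [← h]
  have : u i - w i = (u - w) i := rfl
  rw [this]
  exact Finset.single_le_sum (f := fun j => |(u - w) j|) (fun j _ => abs_nonneg _) (Finset.mem_univ i)

lemma extBd_finite {d : ℕ} (Λ : Finset (Fin d → ℤ)) : (extBd Λ).Finite := by
  have : extBd Λ ⊆ ⋃ u ∈ (Λ : Set (Fin d → ℤ)), {w | ∀ i, w i ∈ Set.Icc (u i - 1) (u i + 1)} := by
    rintro w ⟨-, u, hu, hadj⟩
    refine Set.mem_biUnion hu fun i => ?_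
    have := adj_abs_le hadj i
    constructor <;> [skip; skip] <;> cases' abs_le.mp this with h1 h2 <;> omega
  refine Set.Finite.subset (Set.Finite.biUnion Λ.finite_toSet fun u _ => ?_) this
  have : {w : Fin d → ℤ | ∀ i, w i ∈ Set.Icc (u i - 1) (u i + 1)}
      = Set.pi Set.univ (fun i => Set.Icc (u i - 1) (u i + 1)) := by
    ext w; simp only [Set.mem_setOf_eq, Set.mem_pi, Set.mem_univ, forall_true_left]
  rw [this]
  exact Set.Finite.pi fun i => Set.finite_Icc _ _

lemma lamPlus_finite {d : ℕ} (Λ : Finset (Fin d → ℤ)) : (lamPlus Λ).Finite :=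
  Λ.finite_toSet.union (extBd_finite Λ)


-- ### boundedness of height functions

/-- walking along `e₀` direction from a point of `Λ` exits eventually through the boundary -/
lemma bound_on_lam {d : ℕ} (Λ : Finset (Fin d → ℤ)) (hd : 0 < d)
    {f : (Fin d → ℤ) → ℤ} (hedge : ∀ u ∈ lamPlus Λ, ∀ w ∈ lamPlus Λ, Adj u w → |f u - f w| = 1)
    {M : ℤ} (hM : ∀ w ∈ extBd Λ, |f w| ≤ M)
    {u : Fin d → ℤ} (hu : u ∈ Λ) : |f u| ≤ M + Λ.card := by
  classical
  set i0 : Fin d := ⟨0, hd⟩ with hi0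
  set g : ℕ → (Fin d → ℤ) := fun n => fun i => u i + (if i = i0 then (n : ℤ) else 0) with hg
  have hginj : Function.Injective g := by
    intro a b hab
    have := congrFun hab i0
    simp [hg] at this
    exact Nat.cast_injective this
  have hadj : ∀ n : ℕ, Adj (g n) (g (n + 1)) := by
    intro n
    unfold Adj norm1
    have : ∀ i, |(g n - g (n+1)) i| = if i = i0 then 1 else 0 := by
      intro i
      simp only [Pi.sub_apply, hg]
      by_cases h : i = i0 <;> simp [h] <;> push_cast <;> ring_nf <;> simp
    rw [Finset.sum_congr rfl fun i _ => this i]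
    simp
  have hex : ∃ n, g n ∉ Λ := by
    by_contra hc
    push_neg at hc
    have : Set.range g ⊆ (Λ : Set (Fin d → ℤ)) := by rintro x ⟨n, rfl⟩; exact hc n
    exact (Set.infinite_range_of_injective hginj) (Λ.finite_toSet.subset this)
  set n0 := Nat.find hex with hn0
  have hg0 : g 0 = u := by funext i; simp [hg]
  have hlt : ∀ i < n0, g i ∈ Λ := fun i hi => not_not.mp (Nat.find_min hex hi)
  have hn0pos : 0 < n0 := by
    rcases Nat.eq_zero_or_pos n0 with h | h
    · exfalso; have := Nat.find_spec hex; rw [← hn0, h, hg0] at this; exact this hu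
    · exact h
  have hgn0 : g n0 ∈ extBd Λ := by
    refine ⟨Nat.find_spec hex, g (n0 - 1), hlt _ (by omega), ?_⟩
    have := hadj (n0 - 1)
    rwa [Nat.sub_add_cancel hn0pos] at this
  have hmemLP : ∀ i ≤ n0, g i ∈ lamPlus Λ := by
    intro i hi
    rcases lt_or_eq_of_le hi with h | h
    · exact Or.inl (hlt i h)
    · rw [h]; exact Or.inr hgn0
  have hchain : ∀ i ≤ n0, |f u - f (g i)| ≤ i := by
    intro i hi
    induction i with
    | zero => simp [hg0]
    | succ n ih =>
      have h1 : |f u - f (g n)| ≤ n := ih (by omega)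
      have h2 : |f (g n) - f (g (n+1))| = 1 :=
        hedge _ (hmemLP n (by omega)) _ (hmemLP (n+1) hi) (hadj n)
      calc |f u - f (g (n+1))| ≤ |f u - f (g n)| + |f (g n) - f (g (n+1))| := by
            have := abs_sub_abs_le_abs_sub (f u - f (g n)) (f (g (n+1)) - f (g n))
            have := abs_add_le (f u - f (g n)) (f (g n) - f (g (n+1)))
            calc |f u - f (g (n+1))| = |(f u - f (g n)) + (f (g n) - f (g (n+1)))| := by ring_nf
              _ ≤ _ := abs_add_le _ _
        _ ≤ n + 1 := by push_cast; omega
  have hcard : n0 ≤ Λ.card := by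
    have hsub : (Finset.range n0).image g ⊆ Λ := by
      intro x hx
      rcases Finset.mem_image.mp hx with ⟨i, hi, rfl⟩
      exact hlt i (Finset.mem_range.mp hi)
    have := Finset.card_le_card hsub
    rwa [Finset.card_image_of_injective _ hginj, Finset.card_range] at this
  have h1 := hchain n0 le_rfl
  have h2 := hM _ hgn0
  have h3 := abs_sub_abs_le_abs_sub (f u) (f (g n0))
  have : (n0 : ℤ) ≤ (Λ.card : ℤ) := by exact_mod_cast hcard
  omega

lemma hset_finite {d : ℕ} (Λ : Finset (Fin d → ℤ)) (τ : (Fin d → ℤ) → ℤ)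
    (v : Fin d → ℤ) (hv : v ∈ Λ) (j : ℤ) : (Hset Λ τ v j).Finite := by
  classical
  set M : ℤ := (((extBd_finite Λ).toFinset.sup fun w => (τ w).natAbs : ℕ) : ℤ) with hM
  have hMb : ∀ w ∈ extBd Λ, |τ w| ≤ M := by
    intro w hw
    have : (τ w).natAbs ≤ (extBd_finite Λ).toFinset.sup fun w => (τ w).natAbs :=
      Finset.le_sup (f := fun w => (τ w).natAbs) ((extBd_finite Λ).mem_toFinset.mpr hw)
    rw [Int.abs_eq_natAbs, hM]
    exact_mod_cast this
  set B : ℤ := M + Λ.card + |j| with hB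
  have hMnn : 0 ≤ M := by positivity
  have hbdd : ∀ f ∈ Hset Λ τ v j, ∀ u, |f u| ≤ B := by
    rintro f ⟨hzero, ⟨hedge, hpar⟩, hbd, hfv⟩ u
    by_cases hu : u ∈ lamPlus Λ
    · rcases hu with hu | hu
      · rcases Nat.eq_zero_or_pos d with hd | hd
        · -- d = 0 : u = v
          have : u = v := funext fun i => absurd i.2 (by omega)
          rw [this, hfv, hB]
          have : (0:ℤ) ≤ Λ.card := by positivity
          omega
        · have hfM : ∀ w ∈ extBd Λ, |f w| ≤ M := fun w hw => (hbd w hw) ▸ hMb w hw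
          have := bound_on_lam Λ hd hedge hfM hu
          have : (0:ℤ) ≤ |j| := abs_nonneg _
          omega
      · rw [hbd u hu, hB]
        have h1 := hMb u hu
        have h2 : (0:ℤ) ≤ Λ.card := by positivity
        have h3 : (0:ℤ) ≤ |j| := abs_nonneg _
        omega
    · rw [hzero u hu]
      simp only [abs_zero]
      positivity
  -- restriction map
  set LP := (lamPlus_finite Λ).toFinset with hLP
  set ρ : ((Fin d → ℤ) → ℤ) → ({y // y ∈ LP} → ℤ) := fun f x => f x.1 with hρ
  have hinj : Set.InjOn ρ (Hset Λ τ v j) := by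
    rintro f hf g hg hfg
    funext x
    by_cases hx : x ∈ lamPlus Λ
    · exact congrFun hfg ⟨x, (lamPlus_finite Λ).mem_toFinset.mpr hx⟩
    · rw [hf.1 x hx, hg.1 x hx]
  have himg : ρ '' (Hset Λ τ v j) ⊆ Set.pi Set.univ (fun _ : {y // y ∈ LP} => Set.Icc (-B) B) := by
    rintro _ ⟨f, hf, rfl⟩
    intro x _
    have := hbdd f hf x.1
    rw [Set.mem_Icc]
    exact abs_le.mp this
  have hfinimg : (ρ '' (Hset Λ τ v j)).Finite :=
    Set.Finite.subset (Set.Finite.pi fun _ => Set.finite_Icc _ _) himg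
  exact Set.Finite.of_finite_image hfinimg hinj


-- ### the swap construction

def swp {d : ℕ} (U : Set (Fin d → ℤ)) (s : ℤ) (a b : (Fin d → ℤ) → ℤ) : (Fin d → ℤ) → ℤ :=
  fun x => if x ∈ U then b x + s else a x

def swpU {d : ℕ} (Λ : Finset (Fin d → ℤ)) (v : Fin d → ℤ) (K : ℤ)
    (a b : (Fin d → ℤ) → ℤ) : Set (Fin d → ℤ) :=
  {x | connIn {y | y ∈ lamPlus Λ ∧ b y + 2*K < a y} v x}

def swpU' {d : ℕ} (Λ : Finset (Fin d → ℤ)) (v : Fin d → ℤ) (K : ℤ)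
    (f h : (Fin d → ℤ) → ℤ) : Set (Fin d → ℤ) :=
  {x | connIn {y | y ∈ lamPlus Λ ∧ f y < h y + 2*K} v x}

lemma swap_main {d : ℕ} {Λ : Finset (Fin d → ℤ)} {τ : (Fin d → ℤ) → ℤ} {v : Fin d → ℤ}
    {K : ℤ} {a b : (Fin d → ℤ) → ℤ} {j₁ j₂ : ℤ}
    (hK : 0 < K) (hv : v ∈ Λ)
    (ha : a ∈ Hset Λ τ v j₁) (hb : b ∈ Hset Λ τ v j₂) (hgt : j₂ + 2*K < j₁) :
    swp (swpU Λ v K a b) (2*K) a b ∈ Hset Λ τ v (j₂ + 2*K) ∧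
    swp (swpU Λ v K a b) (-(2*K)) b a ∈ Hset Λ τ v (j₁ - 2*K) ∧
    swp (swpU' Λ v K (swp (swpU Λ v K a b) (2*K) a b) (swp (swpU Λ v K a b) (-(2*K)) b a))
      (2*K) (swp (swpU Λ v K a b) (2*K) a b) (swp (swpU Λ v K a b) (-(2*K)) b a) = a ∧
    swp (swpU' Λ v K (swp (swpU Λ v K a b) (2*K) a b) (swp (swpU Λ v K a b) (-(2*K)) b a))
      (-(2*K)) (swp (swpU Λ v K a b) (-(2*K)) b a) (swp (swpU Λ v K a b) (2*K) a b) = b := by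
  classical
  obtain ⟨haz, ⟨hae, hap⟩, habd, hav⟩ := ha
  obtain ⟨hbz, ⟨hbe, hbp⟩, hbbd, hbv⟩ := hb
  set LP := lamPlus Λ with hLP
  set S : Set (Fin d → ℤ) := {y | y ∈ LP ∧ b y + 2*K < a y} with hS
  have hUdef : swpU Λ v K a b = {x | connIn S v x} := rfl
  set U : Set (Fin d → ℤ)  := swpU Λ v K a b with hU
  have hvS : v ∈ S := ⟨Or.inl hv, by rw [hav, hbv]; omega⟩
  have hUS : U ⊆ S := by
    intro x hx
    have hx' : connIn S v x := hx
    induction hx' with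
    | refl => exact hvS
    | tail _ h _ => exact h.2.1
  have hvU : v ∈ U := Relation.ReflTransGen.refl
  have hpar : ∀ x ∈ LP, (a x - b x) % 2 = 0 := by
    intro x hx
    have h1 := hap x hx; have h2 := hbp x hx; omega
  have habs : ∀ p q : ℤ, |p - q| = 1 → p - q = 1 ∨ p - q = -1 := by
    intro p q h; exact (abs_eq (by norm_num)).mp h
  -- jump condition at the boundary of U
  have hjump : ∀ x ∈ U, ∀ y ∈ LP, Adj x y → y ∉ U → a y = b y + 2*K := by
    intro x hxU y hy hadj hyU
    have hxS := hUS hxU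
    have h1 := habs _ _ (hae x hxS.1 y hy hadj)
    have h2 := habs _ _ (hbe x hxS.1 y hy hadj)
    have hx2 := hpar x hxS.1
    have hy2 := hpar y hy
    have hne : ¬ (b y + 2*K < a y) := by
      intro hc
      exact hyU (Relation.ReflTransGen.tail hxU ⟨hxS, ⟨hy, hc⟩, hadj⟩)
    have hxgt := hxS.2
    omega
  -- membership of the first swapped function
  have hm1 : swp U (2*K) a b ∈ Hset Λ τ v (j₂ + 2*K) := by
    refine ⟨?_, ⟨?_, ?_⟩, ?_, ?_⟩
    · intro u hu
      have huU : u ∉ U := fun h => hu (hUS h).1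
      simp only [swp, if_neg huU]
      exact haz u hu
    · intro u hu w hw hadj
      by_cases huU : u ∈ U <;> by_cases hwU : w ∈ U <;>
        simp only [swp, if_pos, if_neg, huU, hwU, if_true, if_false]
      · rw [show b u + 2*K - (b w + 2*K) = b u - b w by ring]
        exact hbe u hu w hw hadj
      · rw [hjump u huU w hw hadj hwU,
          show b u + 2*K - (b w + 2*K) = b u - b w by ring]
        exact hbe u hu w hw hadj
      · rw [hjump w hwU u hu (adj_symm hadj) huU,
          show b u + 2*K - (b w + 2*K) = b u - b w by ring]
        exact hbe u hu w hw hadj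
      · exact hae u hu w hw hadj
    · intro u hu
      by_cases huU : u ∈ U <;> simp only [swp, huU, if_true, if_false]
      · have := hbp u hu; omega
      · exact hap u hu
    · intro w hw
      have hwU : w ∉ U := by
        intro h
        have h1 := (hUS h).2
        rw [habd w hw, hbbd w hw] at h1
        omega
      simp only [swp, if_neg hwU]
      exact habd w hw
    · simp only [swp, if_pos hvU, hbv]
  -- membership of the second swapped function
  have hm2 : swp U (-(2*K)) b a ∈ Hset Λ τ v (j₁ - 2*K) := by
    refine ⟨?_, ⟨?_, ?_⟩, ?_, ?_⟩
    · intro u hu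
      have huU : u ∉ U := fun h => hu (hUS h).1
      simp only [swp, if_neg huU]
      exact hbz u hu
    · intro u hu w hw hadj
      by_cases huU : u ∈ U <;> by_cases hwU : w ∈ U <;>
        simp only [swp, if_pos, if_neg, huU, hwU, if_true, if_false]
      · rw [show a u + -(2*K) - (a w + -(2*K)) = a u - a w by ring]
        exact hae u hu w hw hadj
      · have h3 : b w = a w + -(2*K) := by have := hjump u huU w hw hadj hwU; omega
        rw [h3, show a u + -(2*K) - (a w + -(2*K)) = a u - a w by ring]
        exact hae u hu w hw hadj
      · have h3 : b u = a u + -(2*K) := by have := hjump w hwU u hu (adj_symm hadj) huU; omega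
        rw [h3, show a u + -(2*K) - (a w + -(2*K)) = a u - a w by ring]
        exact hae u hu w hw hadj
      · exact hbe u hu w hw hadj
    · intro u hu
      by_cases huU : u ∈ U <;> simp only [swp, huU, if_true, if_false]
      · have := hap u hu; omega
      · exact hbp u hu
    · intro w hw
      have hwU : w ∉ U := by
        intro h
        have h1 := (hUS h).2
        rw [habd w hw, hbbd w hw] at h1
        omega
      simp only [swp, if_neg hwU]
      exact hbbd w hw
    · simp only [swp, if_pos hvU, hav]; ring
  -- recovery of the cluster
  set f := swp U (2*K) a b with hf
  set h := swp U (-(2*K)) b a with hh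
  set S' : Set (Fin d → ℤ) := {y | y ∈ LP ∧ f y < h y + 2*K} with hS'
  have hU'def : swpU' Λ v K f h = {x | connIn S' v x} := rfl
  have hUS' : U ⊆ S' := by
    intro x hx
    have hxS := hUS hx
    refine ⟨hxS.1, ?_⟩
    simp only [hf, hh, swp, if_pos hx]
    have := hxS.2
    omega
  have hUrec : swpU' Λ v K f h = U := by
    apply Set.Subset.antisymm
    · intro x hx
      have hx' : connIn S' v x := hx
      clear hx
      induction hx' with
      | refl => exact hvU
      | tail hvy hstep ih =>
        rename_i y z
        have hyU : y ∈ U := ih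
        by_contra hzU
        have hz := hstep.2.1
        have h1 : f z = a z := by simp only [hf, swp, if_neg hzU]
        have h2 : h z = b z := by simp only [hh, swp, if_neg hzU]
        have h3 := hz.2
        rw [h1, h2] at h3
        have := hjump y hyU z hz.1 hstep.2.2 hzU
        omega
    · intro x hx
      have hx' : connIn S v x := hx
      clear hx
      show connIn S' v x
      induction hx' with
      | refl => exact Relation.ReflTransGen.refl
      | tail hvy hstep ih =>
        rename_i y z
        have hyU : y ∈ U := hvy
        have hzU : z ∈ U := Relation.ReflTransGen.tail hvy hstep
        exact Relation.ReflTransGen.tail ih ⟨hUS' hyU, hUS' hzU, hstep.2.2⟩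
  refine ⟨hm1, hm2, ?_, ?_⟩
  · rw [hUrec]
    funext x
    by_cases hx : x ∈ U <;> simp only [swp, hf, hh, hx, if_true, if_false]
    · ring
  · rw [hUrec]
    funext x
    by_cases hx : x ∈ U <;> simp only [swp, hf, hh, hx, if_true, if_false]
    · ring

lemma ncard_sprod {α β : Type*} (s : Set α) (t : Set β) :
    (s ×ˢ t).ncard = s.ncard * t.ncard := by
  rw [← Nat.card_coe_set_eq, ← Nat.card_coe_set_eq, ← Nat.card_coe_set_eq]
  rw [← Nat.card_prod]
  exact Nat.card_congr (Equiv.Set.prod s t)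

theorem stmt6 {d : ℕ} (Λ : Finset (Fin d → ℤ)) (τ : (Fin d → ℤ) → ℤ)
    (hτ : IsHHFOn (extBd Λ) τ)
    (v : Fin d → ℤ) (hv : v ∈ Λ)
    (m : ℤ) (hm : m % 2 = norm1 v % 2)
    (k : ℕ) (hk : 0 < k) :
    (Hset Λ τ v (m + 2 * k)).ncard * (Hset Λ τ v (m - 2 * k)).ncard ≤
      (Hset Λ τ v m).ncard ^ 2 := by
  classical
  set K : ℤ := (k : ℤ) with hKdef
  have hK : 0 < K := by rw [hKdef]; exact_mod_cast hk
  have hgt : (m - 2*K) + 2*K < m + 2*K := by omega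
  set A := Hset Λ τ v (m + 2*K) with hA
  set B := Hset Λ τ v (m - 2*K) with hB
  set C := Hset Λ τ v m with hC
  set F : ((Fin d → ℤ) → ℤ) × ((Fin d → ℤ) → ℤ) → ((Fin d → ℤ) → ℤ) × ((Fin d → ℤ) → ℤ) :=
    fun p => (swp (swpU Λ v K p.1 p.2) (2*K) p.1 p.2,
      swp (swpU Λ v K p.1 p.2) (-(2*K)) p.2 p.1) with hF
  have himg : F '' (A ×ˢ B) ⊆ C ×ˢ C := by
    rintro ⟨f, h⟩ ⟨⟨a, b⟩, hab, heq⟩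
    rw [← heq, hF]
    simp only [Set.mem_prod] at hab ⊢
    obtain ⟨h1, h2, -, -⟩ := swap_main hK hv hab.1 hab.2 hgt
    constructor
    · rw [hC, show m = (m - 2*K) + 2*K by ring]; exact h1
    · rw [hC, show m = (m + 2*K) - 2*K by ring]; exact h2
  have hinj : Set.InjOn F (A ×ˢ B) := by
    rintro ⟨a₁, b₁⟩ hp ⟨a₂, b₂⟩ hq heq
    simp only [Set.mem_prod] at hp hq
    obtain ⟨-, -, hr1, hr2⟩ := swap_main hK hv hp.1 hp.2 hgt
    obtain ⟨-, -, hs1, hs2⟩ := swap_main hK hv hq.1 hq.2 hgt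
    have ef : swp (swpU Λ v K a₁ b₁) (2*K) a₁ b₁ = swp (swpU Λ v K a₂ b₂) (2*K) a₂ b₂ :=
      congrArg Prod.fst heq
    have eh : swp (swpU Λ v K a₁ b₁) (-(2*K)) b₁ a₁ = swp (swpU Λ v K a₂ b₂) (-(2*K)) b₂ a₂ :=
      congrArg Prod.snd heq
    have e1 : a₁ = a₂ := by rw [← hr1, ← hs1, ef, eh]
    have e2 : b₁ = b₂ := by rw [← hr2, ← hs2, ef, eh]
    rw [e1, e2]
  have hfinC : C.Finite := hset_finite Λ τ v hv m
  calc A.ncard * B.ncard = (A ×ˢ B).ncard := (ncard_sprod A B).symm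
    _ = (F '' (A ×ˢ B)).ncard := (Set.ncard_image_of_injOn hinj).symm
    _ ≤ (C ×ˢ C).ncard := Set.ncard_le_ncard himg (hfinC.prod hfinC)
    _ = C.ncard * C.ncard := ncard_sprod C C
    _ = C.ncard ^ 2 := (sq C.ncard).symm
end
end

section
/- Let (f(n))_{n ∈ Z} be a stationary integer-valued stochastic process with |f(n+1) - f(n)| = 1 almost surely. Then lim_{n→∞} (f(n) - f(0))/n = 0 almost surely. -/
open MeasureTheory Filter
open scoped ENNReal Classical
noncomputable section

namespace Stmt13

abbrev Om : Type := ℤ → ℤ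

def T : Om → Om := fun x n => x (n + 1)

lemma measurable_T : Measurable T :=
  measurable_pi_lambda _ fun _ => measurable_pi_apply _

lemma T_iter (k : ℕ) (x : Om) (n : ℤ) : (T^[k] x) n = x (n + k) := by
  induction k generalizing x n with
  | zero => simp
  | succ k ih =>
    rw [Function.iterate_succ_apply, ih]
    show x (n + k + 1) = _
    congr 1; push_cast; ring

lemma measurable_coordR (a b : ℤ) : Measurable fun x : Om => ((x a - x b : ℤ) : ℝ) := by
  have h1 : Measurable fun x : Om => (x a - x b : ℤ) :=
    (measurable_pi_apply a).sub (measurable_pi_apply b)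
  exact (measurable_from_top (f := fun n : ℤ => (n : ℝ))).comp h1

/-- Maximal ergodic theorem (Garsia's proof), for bounded measurable φ. -/
lemma maximal (μ : Measure Om) [IsProbabilityMeasure μ] (hT : MeasurePreserving T μ μ)
    (φ : Om → ℝ) (hφm : Measurable φ) {C : ℝ} (hφb : ∀ x, |φ x| ≤ C) :
    0 ≤ ∫ x, Set.indicator {y | ∃ n, 0 < birkhoffSum T φ n y} φ x ∂μ := by
  have hC : 0 ≤ C := le_trans (abs_nonneg _) (hφb (fun _ => 0))
  have hSm : ∀ n, Measurable (birkhoffSum T φ n) := by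
    intro n
    unfold birkhoffSum
    exact Finset.measurable_sum _ fun k _ => hφm.comp (measurable_T.iterate k)
  have hSb : ∀ n x, |birkhoffSum T φ n x| ≤ n * C := by
    intro n x
    calc |birkhoffSum T φ n x| ≤ ∑ k ∈ Finset.range n, |φ (T^[k] x)| :=
          Finset.abs_sum_le_sum_abs _ _
      _ ≤ ∑ _k ∈ Finset.range n, C := Finset.sum_le_sum fun k _ => hφb _
      _ = n * C := by simp [mul_comm]
  set M : ℕ → Om → ℝ := fun N x =>
    (Finset.range (N + 1)).sup' (by simp) (fun k => birkhoffSum T φ k x) with hMdef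
  have hM0 : ∀ N x, 0 ≤ M N x := by
    intro N x
    have h := Finset.le_sup' (fun k => birkhoffSum T φ k x)
      (Finset.mem_range.2 (Nat.succ_pos N))
    exact le_trans (le_of_eq (birkhoffSum_zero T φ x).symm) h
  have hMle : ∀ {N N'} (_ : N ≤ N') (x : Om), M N x ≤ M N' x := by
    intro N N' h x
    exact Finset.sup'_le _ _ fun k hk =>
      Finset.le_sup' (fun k => birkhoffSum T φ k x)
        (Finset.mem_range.2 (by have := Finset.mem_range.1 hk; omega))
  have hMm : ∀ N, Measurable (M N) := by
    intro N
    have h := Finset.measurable_sup' (s := Finset.range (N+1)) (by simp)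
      (f := fun k => birkhoffSum T φ k) (fun k _ => hSm k)
    have he : M N = (Finset.range (N+1)).sup' (by simp) (fun k => birkhoffSum T φ k) := by
      funext x; rw [Finset.sup'_apply]
    rw [he]; exact h
  have hMb : ∀ N x, |M N x| ≤ (N + 1) * C := by
    intro N x
    rw [abs_of_nonneg (hM0 N x)]
    refine Finset.sup'_le _ _ fun k hk => ?_
    calc birkhoffSum T φ k x ≤ |birkhoffSum T φ k x| := le_abs_self _
      _ ≤ k * C := hSb k x
      _ ≤ (N + 1) * C := by
          have hkN : k ≤ N := Nat.lt_succ_iff.mp (Finset.mem_range.1 hk)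
          have h2 : (k : ℝ) ≤ (N : ℝ) := by exact_mod_cast hkN
          nlinarith
  have intble : ∀ (f : Om → ℝ) (D : ℝ), Measurable f → (∀ x, |f x| ≤ D) → Integrable f μ := by
    intro f D hm hb
    exact ⟨hm.aestronglyMeasurable,
      HasFiniteIntegral.of_bounded (C := D) (ae_of_all _ fun x => by
        simpa [Real.norm_eq_abs] using hb x)⟩
  set A : ℕ → Set Om := fun N => {x | 0 < M N x} with hAdef
  have hAmeas : ∀ N, MeasurableSet (A N) := fun N => measurableSet_lt measurable_const (hMm N)
  have hAmono : ∀ {N N'}, N ≤ N' → A N ⊆ A N' := by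
    intro N N' h x hx
    exact lt_of_lt_of_le hx (hMle h x)
  -- key pointwise inequality
  have hkey : ∀ N x, M (N + 1) x - M N (T x) ≤ (A (N + 1)).indicator φ x := by
    intro N x
    by_cases hx : x ∈ A (N + 1)
    · rw [Set.indicator_of_mem hx]
      obtain ⟨k, hk, hEq⟩ := Finset.exists_mem_eq_sup' (s := Finset.range (N + 2))
        (by simp) (fun k => birkhoffSum T φ k x)
      match k, hk with
      | 0, _ =>
        exfalso
        have : M (N+1) x = 0 := by simpa [birkhoffSum_zero] using hEq
        exact absurd hx (by simp [hAdef, this])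
      | (j+1), hk =>
        have hj : j ∈ Finset.range (N + 1) :=
          Finset.mem_range.2 (by have := Finset.mem_range.1 hk; omega)
        have hEq' : M (N+1) x = birkhoffSum T φ (j+1) x := hEq
        have h1 : M (N+1) x = φ x + birkhoffSum T φ j (T x) := by
          rw [hEq']; exact birkhoffSum_succ' T φ j x
        have h2 : birkhoffSum T φ j (T x) ≤ M N (T x) :=
          Finset.le_sup' (fun k => birkhoffSum T φ k (T x)) hj
        linarith
    · rw [Set.indicator_of_notMem hx]
      have h1 : M (N+1) x ≤ 0 := le_of_not_gt hx
      have h2 : 0 ≤ M N (T x) := hM0 N (T x)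
      linarith
  have hIntM : ∀ N, Integrable (M N) μ := fun N => intble _ _ (hMm N) (hMb N)
  have hIntMT : ∀ N, Integrable (fun x => M N (T x)) μ := fun N =>
    intble _ ((N + 1) * C) ((hMm N).comp measurable_T) (fun x => hMb N (T x))
  have hIntInd : ∀ N, Integrable ((A N).indicator φ) μ := by
    intro N
    refine intble _ C (hφm.indicator (hAmeas N)) fun x => ?_
    by_cases hx : x ∈ A N
    · rw [Set.indicator_of_mem hx]; exact hφb x
    · rw [Set.indicator_of_notMem hx]; simpa using hC
  have hMT_int_eq : ∀ N, ∫ x, M N (T x) ∂μ = ∫ x, M N x ∂μ := by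
    intro N
    rw [← integral_map hT.measurable.aemeasurable (hMm N).aestronglyMeasurable, hT.map_eq]
  have hpos : ∀ N, 0 ≤ ∫ x, (A (N + 1)).indicator φ x ∂μ := by
    intro N
    have h1 : ∫ x, (M (N+1) x - M N (T x)) ∂μ ≤ ∫ x, (A (N + 1)).indicator φ x ∂μ :=
      integral_mono ((hIntM (N+1)).sub (hIntMT N)) (hIntInd (N+1)) (fun x => hkey N x)
    rw [integral_sub (hIntM (N+1)) (hIntMT N), hMT_int_eq N] at h1
    have h2 : ∫ x, M N x ∂μ ≤ ∫ x, M (N+1) x ∂μ :=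
      integral_mono (hIntM N) (hIntM (N+1)) (fun x => hMle (by omega) x)
    linarith
  -- pass to the limit
  have hAU : {y | ∃ n, 0 < birkhoffSum T φ n y} = ⋃ N, A N := by
    ext x
    simp only [Set.mem_setOf_eq, Set.mem_iUnion]
    constructor
    · rintro ⟨n, hn⟩
      exact ⟨n, lt_of_lt_of_le hn (Finset.le_sup' (fun k => birkhoffSum T φ k x)
        (Finset.mem_range.2 (Nat.lt_succ_self n)))⟩
    · rintro ⟨N, hN⟩
      by_contra h
      push_neg at h
      exact absurd (Finset.sup'_le _ _ fun k _ => h k) (not_le.2 hN)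
  have hten : Tendsto (fun N => ∫ x, (A N).indicator φ x ∂μ) atTop
      (nhds (∫ x, Set.indicator {y | ∃ n, 0 < birkhoffSum T φ n y} φ x ∂μ)) := by
    refine tendsto_integral_of_dominated_convergence (fun _ => C)
      (fun N => (hφm.indicator (hAmeas N)).aestronglyMeasurable)
      (integrable_const C) (fun N => ae_of_all _ fun x => ?_) (ae_of_all _ fun x => ?_)
    · by_cases hx : x ∈ A N
      · rw [Set.indicator_of_mem hx]; simpa [Real.norm_eq_abs] using hφb x
      · rw [Set.indicator_of_notMem hx]; simpa [Real.norm_eq_abs] using hC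
    · by_cases hx : x ∈ {y | ∃ n, 0 < birkhoffSum T φ n y}
      · have hx' : x ∈ ⋃ N, A N := hAU ▸ hx
        obtain ⟨N₀, hN₀⟩ := Set.mem_iUnion.1 hx'
        have hev : ∀ᶠ N in atTop, Set.indicator {y | ∃ n, 0 < birkhoffSum T φ n y} φ x
            = (A N).indicator φ x := by
          filter_upwards [eventually_ge_atTop N₀] with N hN
          rw [Set.indicator_of_mem (hAmono hN hN₀), Set.indicator_of_mem hx]
        exact Tendsto.congr' hev tendsto_const_nhds
      · have hnot : ∀ N, x ∉ A N := by
          intro N hN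
          exact hx (hAU ▸ (Set.mem_iUnion.2 ⟨N, hN⟩))
        have : ∀ N, (A N).indicator φ x = Set.indicator {y | ∃ n, 0 < birkhoffSum T φ n y} φ x := by
          intro N
          rw [Set.indicator_of_notMem (hnot N), Set.indicator_of_notMem hx]
        exact Tendsto.congr (fun N => (this N).symm) tendsto_const_nhds
  have hten' : Tendsto (fun N => ∫ x, (A (N+1)).indicator φ x ∂μ) atTop
      (nhds (∫ x, Set.indicator {y | ∃ n, 0 < birkhoffSum T φ n y} φ x ∂μ)) :=
    hten.comp (tendsto_add_atTop_nat 1)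
  exact ge_of_tendsto' hten' hpos

/-- The good set of trajectories with unit increments. -/
def G : Set Om := {x | ∀ n : ℤ, |x (n + 1) - x n| = 1}

lemma G_meas : MeasurableSet G := by
  have : G = ⋂ n : ℤ, {x : Om | |x (n + 1) - x n| = 1} := by
    ext x; simp [G, Set.mem_iInter]
  rw [this]
  refine MeasurableSet.iInter fun n => ?_
  have hf : Measurable fun x : Om => |x (n + 1) - x n| :=
    (measurable_from_top (f := fun m : ℤ => |m|)).comp
      ((measurable_pi_apply (n + 1)).sub (measurable_pi_apply n))
  exact hf (measurableSet_singleton 1)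

lemma mem_G_T (x : Om) : T x ∈ G ↔ x ∈ G := by
  constructor
  · intro h n
    have h2 := h (n - 1)
    have e1 : n - 1 + 1 = n := by ring
    simp only [T] at h2
    rw [e1] at h2
    exact h2
  · intro h n
    show |x (n + 1 + 1) - x (n + 1)| = 1
    exact h (n + 1)

/-- The "frequently drifts upward at rate more than q" bad set, intersected with `G`. -/
def Es (q : ℚ) : Set Om :=
  G ∩ {x | ∃ q' : ℚ, q < q' ∧ ∃ᶠ n : ℕ in atTop, (q' : ℝ) * n < ((x n - x 0 : ℤ) : ℝ)}

lemma Es_meas (q : ℚ) : MeasurableSet (Es q) := by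
  refine G_meas.inter ?_
  have he : {x : Om | ∃ q' : ℚ, q < q' ∧ ∃ᶠ n : ℕ in atTop, (q' : ℝ) * n < ((x n - x 0 : ℤ) : ℝ)}
      = ⋃ q' : ℚ, ⋃ _h : q < q', ⋂ a : ℕ, ⋃ b : ℕ, ⋃ _h2 : a ≤ b,
        {x : Om | (q' : ℝ) * b < ((x b - x 0 : ℤ) : ℝ)} := by
    ext x
    simp only [Set.mem_setOf_eq, Set.mem_iUnion, Set.mem_iInter, frequently_atTop]
    constructor
    · rintro ⟨q', h1, h2⟩; exact ⟨q', h1, fun a => by obtain ⟨b, hb, hv⟩ := h2 a; exact ⟨b, hb, hv⟩⟩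
    · rintro ⟨q', h1, h2⟩; exact ⟨q', h1, fun a => by obtain ⟨b, hb, hv⟩ := h2 a; exact ⟨b, hb, hv⟩⟩
  rw [he]
  exact MeasurableSet.iUnion fun q' => MeasurableSet.iUnion fun _ =>
    MeasurableSet.iInter fun a => MeasurableSet.iUnion fun b => MeasurableSet.iUnion fun _ =>
      measurableSet_lt measurable_const (measurable_coordR _ _)

lemma consec (x : Om) (hx : x ∈ G) (m : ℤ) : x (m + 1) - x m = 1 ∨ x (m + 1) - x m = -1 :=
  (abs_eq (by norm_num : (0:ℤ) ≤ 1)).1 (hx m)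

lemma step01 (x : Om) (hx : x ∈ G) : x 1 - x 0 = 1 ∨ x 1 - x 0 = -1 := by
  have := consec x hx 0
  norm_num at this
  exact this

lemma mem_Es_T (q : ℚ) (x : Om) : T x ∈ Es q ↔ x ∈ Es q := by
  constructor
  · rintro ⟨hG', q', hqq', hfreq⟩
    have hxG : x ∈ G := (mem_G_T x).1 hG'
    have hq'' : q < (q + q')/2 := by linarith
    have hq''2 : (q + q')/2 < q' := by linarith
    refine ⟨hxG, (q + q')/2, hq'', ?_⟩
    obtain ⟨n₀, hn₀⟩ := exists_nat_ge ((q' + 1)/(q' - (q + q')/2))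
    rw [frequently_atTop] at hfreq ⊢
    intro a
    obtain ⟨n, hn, hval⟩ := hfreq (max a n₀)
    refine ⟨n + 1, le_trans (le_max_left a n₀) (le_trans hn (by omega)), ?_⟩
    have hB : (-1 : ℤ) ≤ x 1 - x 0 ∧ x 1 - x 0 ≤ 1 := by
      rcases step01 x hxG with h | h <;> omega
    have hBR : (-1 : ℝ) ≤ ((x 1 - x 0 : ℤ) : ℝ) := by exact_mod_cast hB.1
    have hBR2 : ((x 1 - x 0 : ℤ) : ℝ) ≤ 1 := by exact_mod_cast hB.2
    have hvalR : (q' : ℝ) * n < ((x ((n : ℤ) + 1) - x 1 : ℤ) : ℝ) := hval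
    have hidx : ((n + 1 : ℕ) : ℤ) = (n : ℤ) + 1 := by push_cast; ring
    have hsum : ((x ((n:ℤ)+1) - x 0 : ℤ) : ℝ)
        = ((x ((n:ℤ)+1) - x 1 : ℤ) : ℝ) + ((x 1 - x 0 : ℤ) : ℝ) := by push_cast; ring
    have hδpos : (0:ℝ) < (q' : ℝ) - ((q + q')/2 : ℚ) := by
      have : ((q + q')/2 : ℚ) < q' := hq''2
      have h2 : (((q + q')/2 : ℚ) : ℝ) < (q' : ℝ) := by exact_mod_cast this
      linarith
    have hδposQ : (0:ℚ) < q' - (q + q')/2 := by linarith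
    have hn₀Q : q' + 1 ≤ (q' - (q + q')/2) * (n₀ : ℚ) := by
      rw [div_le_iff₀ hδposQ] at hn₀; linarith
    have hn₀R : ((q' : ℝ) + 1) ≤ ((q' : ℝ) - ((q + q')/2 : ℚ)) * n₀ := by
      exact_mod_cast hn₀Q
    have hnn₀ : (n₀ : ℝ) ≤ (n : ℝ) + 1 := by
      have : n₀ ≤ n + 1 := le_trans (le_max_right a n₀) (le_trans hn (by omega))
      exact_mod_cast this
    have hmono : ((q' : ℝ) - ((q + q')/2 : ℚ)) * n₀ ≤ ((q' : ℝ) - ((q + q')/2 : ℚ)) * ((n:ℝ)+1) :=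
      mul_le_mul_of_nonneg_left hnn₀ (le_of_lt hδpos)
    show (((q + q')/2 : ℚ) : ℝ) * ((n+1 : ℕ) : ℝ) < ((x ((n+1:ℕ) : ℤ) - x 0 : ℤ) : ℝ)
    rw [hidx, hsum]
    push_cast
    push_cast at hvalR hmono hn₀R hBR hBR2
    linarith [hvalR, hBR, hBR2, hmono, hn₀R]
  · rintro ⟨hxG, q', hqq', hfreq⟩
    have hq'' : q < (q + q')/2 := by linarith
    have hq''2 : (q + q')/2 < q' := by linarith
    refine ⟨(mem_G_T x).2 hxG, (q + q')/2, hq'', ?_⟩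
    obtain ⟨n₀, hn₀⟩ := exists_nat_ge ((1 - q')/(q' - (q + q')/2))
    rw [frequently_atTop] at hfreq ⊢
    intro a
    obtain ⟨m, hm, hval⟩ := hfreq (max (a + 1) (n₀ + 1))
    have hm1 : 1 ≤ m := le_trans (le_max_left _ _) hm |>.trans' (by omega)
    set n := m - 1 with hndef
    have hmn : m = n + 1 := by omega
    have hna : a ≤ n := by have := le_trans (le_max_left (a+1) (n₀+1)) hm; omega
    have hnn₀ : n₀ ≤ n := by have := le_trans (le_max_right (a+1) (n₀+1)) hm; omega
    refine ⟨n, hna, ?_⟩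
    have hB : (-1 : ℤ) ≤ x 1 - x 0 ∧ x 1 - x 0 ≤ 1 := by
      rcases step01 x hxG with h | h <;> omega
    have hBR : (-1 : ℝ) ≤ ((x 1 - x 0 : ℤ) : ℝ) := by exact_mod_cast hB.1
    have hBR2 : ((x 1 - x 0 : ℤ) : ℝ) ≤ 1 := by exact_mod_cast hB.2
    have hvalR : (q' : ℝ) * m < ((x (m : ℤ) - x 0 : ℤ) : ℝ) := hval
    have hidx : ((m : ℕ) : ℤ) = (n : ℤ) + 1 := by rw [hmn]; push_cast; ring
    have hδpos : (0:ℝ) < (q' : ℝ) - ((q + q')/2 : ℚ) := by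
      have h2 : (((q + q')/2 : ℚ) : ℝ) < (q' : ℝ) := by exact_mod_cast hq''2
      linarith
    have hδposQ : (0:ℚ) < q' - (q + q')/2 := by linarith
    have hn₀Q : 1 - q' ≤ (q' - (q + q')/2) * (n₀ : ℚ) := by
      rw [div_le_iff₀ hδposQ] at hn₀; linarith
    have hn₀R : ((1 : ℝ) - q') ≤ ((q' : ℝ) - ((q + q')/2 : ℚ)) * n₀ := by
      exact_mod_cast hn₀Q
    have hnn₀R : (n₀ : ℝ) ≤ (n : ℝ) := by exact_mod_cast hnn₀
    have hmono : ((q' : ℝ) - ((q + q')/2 : ℚ)) * n₀ ≤ ((q' : ℝ) - ((q + q')/2 : ℚ)) * (n:ℝ) :=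
      mul_le_mul_of_nonneg_left hnn₀R (le_of_lt hδpos)
    -- goal: (q''):ℝ * n < ((T x) ↑n - (T x) 0 : ℤ) : ℝ = x (↑n+1) - x 1
    show (((q + q')/2 : ℚ) : ℝ) * (n : ℝ) < ((x ((n:ℤ) + 1) - x 1 : ℤ) : ℝ)
    have hsum : ((x ((n:ℤ)+1) - x 1 : ℤ) : ℝ)
        = ((x ((n:ℤ)+1) - x 0 : ℤ) : ℝ) - ((x 1 - x 0 : ℤ) : ℝ) := by push_cast; ring
    rw [hidx] at hvalR
    have hmR : (m : ℝ) = (n : ℝ) + 1 := by rw [hmn]; push_cast; ring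
    rw [hmR] at hvalR
    rw [hsum]
    push_cast
    push_cast at hvalR hmono hn₀R hBR hBR2
    linarith [hvalR, hBR, hBR2, hmono, hn₀R]

lemma intble (μ : Measure Om) [IsProbabilityMeasure μ] (f : Om → ℝ) (D : ℝ)
    (hm : Measurable f) (hb : ∀ x, |f x| ≤ D) : Integrable f μ :=
  ⟨hm.aestronglyMeasurable,
    HasFiniteIntegral.of_bounded (C := D) (ae_of_all _ fun x => by
      simpa [Real.norm_eq_abs] using hb x)⟩

lemma Es_null (μ : Measure Om) [IsProbabilityMeasure μ] (hT : MeasurePreserving T μ μ)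
    (q : ℚ) (hq : 0 < q) : μ (Es q) = 0 := by
  classical
  have hq' : (0:ℝ) < (q:ℝ) := by exact_mod_cast hq
  set g : Om → ℝ := fun x => ((x 1 - x 0 : ℤ) : ℝ) with hgdef
  set φ : Om → ℝ := (Es q).indicator (fun x => g x - (q:ℝ)) with hφdef
  have hgm : Measurable g := measurable_coordR 1 0
  have hφm : Measurable φ := (hgm.sub measurable_const).indicator (Es_meas q)
  have habs1 : ∀ x ∈ Es q, (x 1 - x 0 = 1 ∨ x 1 - x 0 = -1) := fun x hx => step01 x hx.1
  have hφb : ∀ x, |φ x| ≤ 1 + q := by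
    intro x
    by_cases hx : x ∈ Es q
    · rw [hφdef, Set.indicator_of_mem hx]
      rcases habs1 x hx with h | h
      · have : g x = 1 := by rw [hgdef]; simp only; rw [h]; norm_num
        rw [this]; rw [abs_le]; constructor <;> [linarith; linarith]
      · have : g x = -1 := by rw [hgdef]; simp only; rw [h]; norm_num
        rw [this]; rw [abs_le]; constructor <;> [linarith; linarith]
    · rw [hφdef, Set.indicator_of_notMem hx]; rw [abs_le]; constructor <;> [linarith; linarith]
  have hiter : ∀ (k : ℕ) (x : Om), (T^[k] x ∈ Es q ↔ x ∈ Es q) := by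
    intro k
    induction k with
    | zero => intro x; simp
    | succ k ih =>
      intro x
      rw [Function.iterate_succ_apply]
      rw [ih (T x)]
      exact mem_Es_T q x
  have hS : ∀ (n : ℕ) (x : Om), birkhoffSum T φ n x
      = if x ∈ Es q then ((x (n : ℤ) - x 0 : ℤ) : ℝ) - (q:ℝ) * n else 0 := by
    intro n
    induction n with
    | zero => intro x; by_cases hx : x ∈ Es q <;> simp [birkhoffSum_zero, hx]
    | succ n ih =>
      intro x
      rw [birkhoffSum_succ, ih]
      have hφT : φ (T^[n] x)
          = if x ∈ Es q then ((x ((n:ℤ)+1) - x (n:ℤ) : ℤ) : ℝ) - (q:ℝ) else 0 := by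
        by_cases hx : x ∈ Es q
        · have hmem : T^[n] x ∈ Es q := (hiter n x).2 hx
          rw [if_pos hx, hφdef, Set.indicator_of_mem hmem]
          have e1 : (T^[n] x) 1 = x ((n:ℤ) + 1) := by rw [T_iter]; congr 1; ring
          have e0 : (T^[n] x) 0 = x (n:ℤ) := by rw [T_iter]; congr 1; ring
          rw [hgdef]; simp only; rw [e1, e0]
        · have hmem : T^[n] x ∉ Es q := fun h => hx ((hiter n x).1 h)
          rw [if_neg hx, hφdef, Set.indicator_of_notMem hmem]
      rw [hφT]
      by_cases hx : x ∈ Es q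
      · rw [if_pos hx, if_pos hx, if_pos hx]
        have hidx : ((n+1:ℕ) : ℤ) = (n:ℤ) + 1 := by push_cast; ring
        rw [hidx]
        push_cast
        ring
      · rw [if_neg hx, if_neg hx, if_neg hx]; ring
  have hAset : {y | ∃ n, 0 < birkhoffSum T φ n y} = Es q := by
    ext x
    simp only [Set.mem_setOf_eq]
    constructor
    · rintro ⟨n, hn⟩
      by_contra hx
      rw [hS n x, if_neg hx] at hn
      exact lt_irrefl _ hn
    · intro hx
      obtain ⟨q', hqq', hfreq⟩ := hx.2
      rw [frequently_atTop] at hfreq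
      obtain ⟨n, -, hval⟩ := hfreq 0
      refine ⟨n, ?_⟩
      rw [hS n x, if_pos hx]
      have hle : (q:ℝ) * n ≤ (q':ℝ) * n := by
        have : (q:ℝ) ≤ (q':ℝ) := by exact_mod_cast le_of_lt hqq'
        exact mul_le_mul_of_nonneg_right this (Nat.cast_nonneg n)
      linarith
  have hmax := maximal μ hT φ hφm (C := 1 + q) hφb
  rw [hAset] at hmax
  have hindid : (Es q).indicator φ = φ := by
    rw [hφdef, Set.indicator_indicator, Set.inter_self]
  rw [hindid] at hmax
  -- level crossing identity
  have hlevmeas : ∀ k : ℤ, MeasurableSet {x : Om | x 0 ≤ k} := fun k =>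
    measurable_pi_apply 0 measurableSet_Iic
  have hlevmeas1 : ∀ k : ℤ, MeasurableSet {x : Om | x 1 ≤ k} := fun k =>
    measurable_pi_apply 1 measurableSet_Iic
  have hlev : ∀ k : ℤ, μ (Es q ∩ {x | x 1 ≤ k}) = μ (Es q ∩ {x | x 0 ≤ k}) := by
    intro k
    have hms : MeasurableSet (Es q ∩ {x : Om | x 0 ≤ k}) := (Es_meas q).inter (hlevmeas k)
    have hpre := hT.measure_preimage hms.nullMeasurableSet
    rw [← hpre]
    congr 1
    ext x
    simp only [Set.mem_preimage, Set.mem_inter_iff, Set.mem_setOf_eq]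
    have e0 : T x 0 = x 1 := by show x (0 + 1) = x 1; norm_num
    rw [e0]
    constructor
    · rintro ⟨h1, h2⟩; exact ⟨(mem_Es_T q x).2 h1, h2⟩
    · rintro ⟨h1, h2⟩; exact ⟨(mem_Es_T q x).1 h1, h2⟩
  set Up : ℤ → Set Om := fun k => Es q ∩ {x | x 0 = k ∧ x 1 = k + 1} with hUpdef
  set Dn : ℤ → Set Om := fun k => Es q ∩ {x | x 1 = k ∧ x 0 = k + 1} with hDndef
  have hUpm : ∀ k, MeasurableSet (Up k) := by
    intro k
    have h0 : MeasurableSet {x : Om | x 0 = k} := by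
      have he : {x : Om | x 0 = k} = (fun x : Om => x 0) ⁻¹' {k} := rfl
      rw [he]; exact measurable_pi_apply 0 (measurableSet_singleton k)
    have h1 : MeasurableSet {x : Om | x 1 = k + 1} := by
      have he : {x : Om | x 1 = k + 1} = (fun x : Om => x 1) ⁻¹' {k+1} := rfl
      rw [he]; exact measurable_pi_apply 1 (measurableSet_singleton (k+1))
    exact (Es_meas q).inter (h0.inter h1)
  have hDnm : ∀ k, MeasurableSet (Dn k) := by
    intro k
    have h0 : MeasurableSet {x : Om | x 1 = k} := by
      have he : {x : Om | x 1 = k} = (fun x : Om => x 1) ⁻¹' {k} := rfl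
      rw [he]; exact measurable_pi_apply 1 (measurableSet_singleton k)
    have h1 : MeasurableSet {x : Om | x 0 = k + 1} := by
      have he : {x : Om | x 0 = k + 1} = (fun x : Om => x 0) ⁻¹' {k+1} := rfl
      rw [he]; exact measurable_pi_apply 0 (measurableSet_singleton (k+1))
    exact (Es_meas q).inter (h0.inter h1)
  have hUk : ∀ k : ℤ, (Es q ∩ {x : Om | x 0 ≤ k}) \ {x : Om | x 1 ≤ k} = Up k := by
    intro k
    ext x
    simp only [Set.mem_diff, Set.mem_inter_iff, Set.mem_setOf_eq, not_le, hUpdef]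
    constructor
    · rintro ⟨⟨hE, h0⟩, h1⟩
      rcases habs1 x hE with h | h
      · exact ⟨hE, by omega, by omega⟩
      · exact ⟨hE, by omega, by omega⟩
    · rintro ⟨hE, h0, h1⟩
      exact ⟨⟨hE, by omega⟩, by omega⟩
  have hDk : ∀ k : ℤ, (Es q ∩ {x : Om | x 1 ≤ k}) \ {x : Om | x 0 ≤ k} = Dn k := by
    intro k
    ext x
    simp only [Set.mem_diff, Set.mem_inter_iff, Set.mem_setOf_eq, not_le, hDndef]
    constructor
    · rintro ⟨⟨hE, h0⟩, h1⟩
      rcases habs1 x hE with h | h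
      · exact ⟨hE, by omega, by omega⟩
      · exact ⟨hE, by omega, by omega⟩
    · rintro ⟨hE, h0, h1⟩
      exact ⟨⟨hE, by omega⟩, by omega⟩
  have hud : ∀ k : ℤ, μ (Up k) = μ (Dn k) := by
    intro k
    have e1 := measure_inter_add_diff (μ := μ) (Es q ∩ {x : Om | x 0 ≤ k}) (hlevmeas1 k)
    have e2 := measure_inter_add_diff (μ := μ) (Es q ∩ {x : Om | x 1 ≤ k}) (hlevmeas k)
    have hcom : Es q ∩ {x : Om | x 0 ≤ k} ∩ {x : Om | x 1 ≤ k}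
        = Es q ∩ {x : Om | x 1 ≤ k} ∩ {x : Om | x 0 ≤ k} := by
      rw [Set.inter_right_comm]
    rw [hcom, hUk k] at e1
    rw [hDk k] at e2
    rw [hlev k] at e2
    rw [← e2] at e1
    have hfin : μ (Es q ∩ {x : Om | x 1 ≤ k} ∩ {x : Om | x 0 ≤ k}) ≠ ∞ := measure_ne_top μ _
    exact (ENNReal.add_right_inj hfin).1 e1
  have hUdisj : Pairwise (Function.onFun Disjoint Up) := by
    intro i j hij
    refine Set.disjoint_left.2 fun x hxi hxj => hij ?_
    rw [← hxi.2.1, ← hxj.2.1]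
  have hDdisj : Pairwise (Function.onFun Disjoint Dn) := by
    intro i j hij
    refine Set.disjoint_left.2 fun x hxi hxj => hij ?_
    rw [← hxi.2.1, ← hxj.2.1]
  have hposEq : Es q ∩ {x : Om | x 1 = x 0 + 1} = ⋃ k, Up k := by
    ext x
    simp only [Set.mem_inter_iff, Set.mem_setOf_eq, Set.mem_iUnion, hUpdef]
    constructor
    · rintro ⟨hE, h⟩; exact ⟨x 0, hE, rfl, h⟩
    · rintro ⟨k, hE, h0, h1⟩; exact ⟨hE, by omega⟩
  have hnegEq : Es q ∩ {x : Om | x 0 = x 1 + 1} = ⋃ k, Dn k := by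
    ext x
    simp only [Set.mem_inter_iff, Set.mem_setOf_eq, Set.mem_iUnion, hDndef]
    constructor
    · rintro ⟨hE, h⟩; exact ⟨x 1, hE, rfl, h⟩
    · rintro ⟨k, hE, h0, h1⟩; exact ⟨hE, by omega⟩
  have hPN : μ (Es q ∩ {x : Om | x 1 = x 0 + 1}) = μ (Es q ∩ {x : Om | x 0 = x 1 + 1}) := by
    rw [hposEq, hnegEq, measure_iUnion hUdisj hUpm, measure_iUnion hDdisj hDnm]
    exact tsum_congr hud
  set P : Set Om := Es q ∩ {x : Om | x 1 = x 0 + 1} with hPdef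
  set Nn : Set Om := Es q ∩ {x : Om | x 0 = x 1 + 1} with hNdef
  have hPm : MeasurableSet P := by
    refine (Es_meas q).inter ?_
    have : Measurable fun x : Om => x 1 - x 0 :=
      (measurable_pi_apply 1).sub (measurable_pi_apply 0)
    have h2 := this (measurableSet_singleton (1:ℤ))
    have he : {x : Om | x 1 = x 0 + 1} = (fun x : Om => x 1 - x 0) ⁻¹' {1} := by
      ext x; simp [Set.mem_preimage]; omega
    rw [he]; exact h2
  have hNm : MeasurableSet Nn := by
    refine (Es_meas q).inter ?_
    have : Measurable fun x : Om => x 0 - x 1 :=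
      (measurable_pi_apply 0).sub (measurable_pi_apply 1)
    have h2 := this (measurableSet_singleton (1:ℤ))
    have he : {x : Om | x 0 = x 1 + 1} = (fun x : Om => x 0 - x 1) ⁻¹' {1} := by
      ext x; simp [Set.mem_preimage]; omega
    rw [he]; exact h2
  have hsplit : (Es q).indicator g
      = fun x => P.indicator (fun _ => (1:ℝ)) x - Nn.indicator (fun _ => (1:ℝ)) x := by
    funext x
    by_cases hx : x ∈ Es q
    · rcases habs1 x hx with h | h
      · have hxP : x ∈ P := ⟨hx, by simp only [Set.mem_setOf_eq]; omega⟩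
        have hxN : x ∉ Nn := fun hN => by
          have := hN.2; simp only [Set.mem_setOf_eq] at this; omega
        rw [Set.indicator_of_mem hx, Set.indicator_of_mem hxP, Set.indicator_of_notMem hxN]
        rw [hgdef]; simp only
        rw [h]; norm_num
      · have hxN : x ∈ Nn := ⟨hx, by simp only [Set.mem_setOf_eq]; omega⟩
        have hxP : x ∉ P := fun hP => by
          have := hP.2; simp only [Set.mem_setOf_eq] at this; omega
        rw [Set.indicator_of_mem hx, Set.indicator_of_notMem hxP, Set.indicator_of_mem hxN]
        rw [hgdef]; simp only
        rw [h]; norm_num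
    · have hxP : x ∉ P := fun hP => hx hP.1
      have hxN : x ∉ Nn := fun hN => hx hN.1
      rw [Set.indicator_of_notMem hx, Set.indicator_of_notMem hxP,
        Set.indicator_of_notMem hxN]
      norm_num
  have hzero : ∫ x, (Es q).indicator g x ∂μ = 0 := by
    rw [hsplit]
    rw [integral_sub ((integrable_const (1:ℝ)).indicator hPm)
      ((integrable_const (1:ℝ)).indicator hNm)]
    rw [integral_indicator_const _ hPm, integral_indicator_const _ hNm]
    rw [measureReal_def, measureReal_def, hPN]
    simp
  have hintEg : Integrable ((Es q).indicator g) μ := by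
    refine intble μ _ 1 (hgm.indicator (Es_meas q)) fun x => ?_
    by_cases hx : x ∈ Es q
    · rw [Set.indicator_of_mem hx]
      rcases habs1 x hx with h | h
      · have : g x = 1 := by rw [hgdef]; simp only; rw [h]; norm_num
        rw [this]; norm_num
      · have : g x = -1 := by rw [hgdef]; simp only; rw [h]; norm_num
        rw [this]; norm_num
    · rw [Set.indicator_of_notMem hx]; norm_num
  have hintEc : Integrable ((Es q).indicator (fun _ => (q:ℝ))) μ :=
    (integrable_const _).indicator (Es_meas q)
  have hφsplit : φ = fun x => (Es q).indicator g x - (Es q).indicator (fun _ => (q:ℝ)) x := by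
    funext x
    rw [hφdef]
    by_cases hx : x ∈ Es q <;> simp [hx]
  have hintφ : ∫ x, φ x ∂μ = -((μ (Es q)).toReal * q) := by
    rw [hφsplit, integral_sub hintEg hintEc, hzero, integral_indicator_const _ (Es_meas q)]
    simp [mul_comm, measureReal_def]
  rw [hintφ] at hmax
  have h1 : (μ (Es q)).toReal = 0 := by
    have h0 : 0 ≤ (μ (Es q)).toReal := ENNReal.toReal_nonneg
    nlinarith
  exact ((ENNReal.toReal_eq_zero_iff _).1 h1).resolve_right (measure_ne_top μ _)

lemma onesided (μ : Measure Om) [IsProbabilityMeasure μ] (hT : MeasurePreserving T μ μ)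
    (hinc : ∀ᵐ x ∂μ, x ∈ G) :
    ∀ᵐ x ∂μ, ∀ q : ℚ, 0 < q → ∀ᶠ n : ℕ in atTop, ((x (n : ℤ) - x 0 : ℤ) : ℝ) ≤ (q:ℝ) * n := by
  have hnull : ∀ᵐ x ∂μ, ∀ q : ℚ, 0 < q → x ∉ Es q := by
    rw [ae_all_iff]
    intro q
    by_cases hq : 0 < q
    · have h := measure_eq_zero_iff_ae_notMem.1 (Es_null μ hT q hq)
      filter_upwards [h] with x hx _
      exact hx
    · exact ae_of_all _ fun x h => absurd h hq
  filter_upwards [hinc, hnull] with x hxG hxE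
  intro q hq
  by_contra hev
  rw [Filter.not_eventually] at hev
  have hfreq : ∃ᶠ n : ℕ in atTop, ((q:ℝ)) * n < ((x (n : ℤ) - x 0 : ℤ) : ℝ) :=
    hev.mono fun n hn => not_le.1 hn
  exact hxE (q/2) (by linarith) ⟨hxG, q, by linarith, hfreq⟩

/-- The negation map. -/
def Ng : Om → Om := fun x n => -(x n)

lemma measurable_Ng : Measurable Ng :=
  measurable_pi_lambda _ fun n =>
    (measurable_from_top (f := fun m : ℤ => -m)).comp (measurable_pi_apply n)

lemma eventually_meas : MeasurableSet {y : Om | ∀ q : ℚ, 0 < q →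
    ∀ᶠ n : ℕ in atTop, ((y (n : ℤ) - y 0 : ℤ) : ℝ) ≤ (q:ℝ) * n} := by
  have he : {y : Om | ∀ q : ℚ, 0 < q →
      ∀ᶠ n : ℕ in atTop, ((y (n : ℤ) - y 0 : ℤ) : ℝ) ≤ (q:ℝ) * n}
      = ⋂ q : ℚ, ⋂ _h : 0 < q, ⋃ a : ℕ, ⋂ b : ℕ, ⋂ _h2 : a ≤ b,
        {y : Om | ((y (b : ℤ) - y 0 : ℤ) : ℝ) ≤ (q:ℝ) * b} := by
    ext y
    simp only [Set.mem_setOf_eq, Set.mem_iInter, Set.mem_iUnion, eventually_atTop]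
  rw [he]
  exact MeasurableSet.iInter fun q => MeasurableSet.iInter fun _ =>
    MeasurableSet.iUnion fun a => MeasurableSet.iInter fun b => MeasurableSet.iInter fun _ =>
      measurableSet_le (measurable_coordR _ _) measurable_const

end Stmt13

theorem stmt13 (μ : Measure (ℤ → ℤ)) [IsProbabilityMeasure μ]
    (hshift : μ.map (fun x (n : ℤ) => x (n + 1)) = μ)
    (hinc : ∀ᵐ x ∂μ, ∀ n : ℤ, |x (n + 1) - x n| = 1) :
    ∀ᵐ x ∂μ, Tendsto (fun n : ℕ => ((x (n : ℤ) - x 0 : ℤ) : ℝ) / (n : ℝ))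
      atTop (nhds 0) := by
  have hT : MeasurePreserving Stmt13.T μ μ := ⟨Stmt13.measurable_T, hshift⟩
  have hincG : ∀ᵐ x ∂μ, x ∈ Stmt13.G := hinc
  have h1 := Stmt13.onesided μ hT hincG
  -- negated process
  set μ' := μ.map Stmt13.Ng with hμ'def
  haveI : IsProbabilityMeasure μ' := Measure.isProbabilityMeasure_map Stmt13.measurable_Ng.aemeasurable
  have hcomm : Stmt13.T ∘ Stmt13.Ng = Stmt13.Ng ∘ Stmt13.T := rfl
  have hT' : MeasurePreserving Stmt13.T μ' μ' := by
    refine ⟨Stmt13.measurable_T, ?_⟩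
    have e1 : μ'.map Stmt13.T = μ.map (Stmt13.Ng ∘ Stmt13.T) := by
      rw [hμ'def, Measure.map_map Stmt13.measurable_T Stmt13.measurable_Ng, hcomm]
    have e2 : μ.map (Stmt13.Ng ∘ Stmt13.T) = (μ.map Stmt13.T).map Stmt13.Ng :=
      (Measure.map_map Stmt13.measurable_Ng Stmt13.measurable_T).symm
    rw [e1, e2, hT.map_eq]
  have hincG' : ∀ᵐ y ∂μ', y ∈ Stmt13.G := by
    refine (MeasureTheory.ae_map_iff Stmt13.measurable_Ng.aemeasurable Stmt13.G_meas).2 ?_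
    filter_upwards [hincG] with x hx
    intro n
    show |(-(x (n + 1))) - (-(x n))| = 1
    have he : (-(x (n + 1))) - (-(x n)) = -(x (n + 1) - x n) := by ring
    rw [he, abs_neg]
    exact hx n
  have h2' := Stmt13.onesided μ' hT' hincG'
  have h2 := (MeasureTheory.ae_map_iff Stmt13.measurable_Ng.aemeasurable
    Stmt13.eventually_meas).1 h2'
  filter_upwards [h1, h2] with x hx1 hx2
  rw [Metric.tendsto_atTop]
  intro ε hε
  obtain ⟨q, hq0, hqε⟩ := exists_rat_btwn hε
  have hq0' : 0 < q := by exact_mod_cast hq0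
  obtain ⟨N₁, hN₁⟩ := eventually_atTop.1 (hx1 q hq0')
  obtain ⟨N₂, hN₂⟩ := eventually_atTop.1 (hx2 q hq0')
  refine ⟨max (max N₁ N₂) 1, fun n hn => ?_⟩
  have hn1 : 1 ≤ n := le_trans (le_max_right _ _) hn
  have hb1 := hN₁ n (le_trans (le_trans (le_max_left _ _) (le_max_left _ _)) hn)
  have hb2 := hN₂ n (le_trans (le_trans (le_max_right _ _) (le_max_left _ _)) hn)
  have hb2' : -(((x (n : ℤ) - x 0 : ℤ) : ℝ)) ≤ (q:ℝ) * n := by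
    have he : ((Stmt13.Ng x (n : ℤ) - Stmt13.Ng x 0 : ℤ) : ℝ)
        = -(((x (n : ℤ) - x 0 : ℤ) : ℝ)) := by
      show (((-(x (n:ℤ))) - (-(x 0)) : ℤ) : ℝ) = _
      push_cast; ring
    rwa [he] at hb2
  have hnpos : (0:ℝ) < (n:ℝ) := by exact_mod_cast hn1
  rw [Real.dist_0_eq_abs]
  have habs : |((x (n : ℤ) - x 0 : ℤ) : ℝ)| ≤ (q:ℝ) * n := abs_le.2 ⟨by linarith, hb1⟩
  rw [abs_div, abs_of_pos hnpos]
  rw [div_lt_iff₀ hnpos]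
  calc |((x (n : ℤ) - x 0 : ℤ) : ℝ)| ≤ (q:ℝ) * n := habs
    _ < ε * n := by
      have := mul_lt_mul_of_pos_right hqε hnpos
      linarith
end
end
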